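/- arXiv:2311.15706 — 4 statements merged into one kernel-verified Lean document; each statement's English description precedes it below -/
import Mathlib

section
/- Let V be a real Banach space, ω : V × V → ℝ a continuous skew-symmetric bilinear form, K = {v ∈ V : ω(v, w) = 0 for all w ∈ V} its kernel, and P : V → V a continuous linear projection (P ∘ P = P) whose range is K. On the symplectic thickening Ṽ = V × K* (K* the topological dual of K with the norm induced from V), define ω̃((v, μ), (v′, μ′)) = ω(v, v′) + μ′(P v) − μ(P v′). Then ω̃ is a skew-symmetric bilinear form which is weakly non-degenerate: if ω̃((v, μ), (v′, μ′)) = 0 for all (v′, μ′) ∈ Ṽ, then v = 0 and μ = 0. -/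
/-- Linear coisotropic embedding theorem, part 1: on the symplectic thickening
`Ṽ = V × K*` of a pre-symplectic Banach space `(V, ω)` with kernel `K` and
continuous linear projection `P` onto `K`, the form
`ω̃((v,μ),(v',μ')) = ω(v,v') + μ'(P v) − μ(P v')` is bilinear, skew-symmetric
and weakly non-degenerate. -/
theorem stmt0 (V : Type*) [NormedAddCommGroup V] [NormedSpace ℝ V] [CompleteSpace V]
    (ω : V →L[ℝ] V →L[ℝ] ℝ) (hskew : ∀ v w : V, ω v w = - ω w v)
    (K : Submodule ℝ V) (hK : ∀ v : V, v ∈ K ↔ ∀ w : V, ω v w = 0)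
    (P : V →L[ℝ] V) (hPK : ∀ v : V, P v ∈ K) (hfix : ∀ v ∈ K, P v = v) :
    let ωt : (V × (K →L[ℝ] ℝ)) → (V × (K →L[ℝ] ℝ)) → ℝ :=
      fun p q => ω p.1 q.1 + q.2 ⟨P p.1, hPK p.1⟩ - p.2 ⟨P q.1, hPK q.1⟩
    (∀ p q, ωt p q = - ωt q p) ∧
    (∀ p p' q, ωt (p + p') q = ωt p q + ωt p' q) ∧
    (∀ (c : ℝ) (p q), ωt (c • p) q = c * ωt p q) ∧
    (∀ p q q', ωt p (q + q') = ωt p q + ωt p q') ∧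
    (∀ (c : ℝ) (p q), ωt p (c • q) = c * ωt p q) ∧
    (∀ p, (∀ q, ωt p q = 0) → p = 0) := by
  intro ωt
  refine ⟨?_, ?_, ?_, ?_, ?_, ?_⟩
  · intro p q
    simp only [ωt, hskew p.1 q.1]
    ring
  · intro p p' q
    simp only [ωt, Prod.fst_add, Prod.snd_add, map_add, ContinuousLinearMap.add_apply]
    have e : q.2 ⟨P p.1 + P p'.1, add_mem (hPK p.1) (hPK p'.1)⟩
        = q.2 ⟨P p.1, hPK p.1⟩ + q.2 ⟨P p'.1, hPK p'.1⟩ := by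
      exact map_add q.2 ⟨P p.1, hPK p.1⟩ ⟨P p'.1, hPK p'.1⟩
    rw [e]; ring
  · intro c p q
    simp only [ωt, Prod.smul_fst, Prod.smul_snd, map_smul, ContinuousLinearMap.smul_apply,
      smul_eq_mul]
    have e : q.2 ⟨c • P p.1, (K.smul_mem c (hPK p.1))⟩ = c * q.2 ⟨P p.1, hPK p.1⟩ := by
      simpa using map_smul q.2 c (⟨P p.1, hPK p.1⟩ : K)
    rw [e]; ring
  · intro p q q'
    simp only [ωt, Prod.fst_add, Prod.snd_add, map_add, ContinuousLinearMap.add_apply]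
    have e : p.2 ⟨P q.1 + P q'.1, add_mem (hPK q.1) (hPK q'.1)⟩
        = p.2 ⟨P q.1, hPK q.1⟩ + p.2 ⟨P q'.1, hPK q'.1⟩ := by
      exact map_add p.2 ⟨P q.1, hPK q.1⟩ ⟨P q'.1, hPK q'.1⟩
    rw [e]; ring
  · intro c p q
    simp only [ωt, Prod.smul_fst, Prod.smul_snd, map_smul, ContinuousLinearMap.smul_apply,
      smul_eq_mul]
    have e : p.2 ⟨c • P q.1, (K.smul_mem c (hPK q.1))⟩ = c * p.2 ⟨P q.1, hPK q.1⟩ := by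
      simpa using map_smul p.2 c (⟨P q.1, hPK q.1⟩ : K)
    rw [e]; ring
  · rintro ⟨v, μ⟩ h
    -- First: P v = 0, using functionals on K.
    have hPv : (⟨P v, hPK v⟩ : K) = 0 := by
      by_contra hne
      obtain ⟨ν, hν⟩ := SeparatingDual.exists_ne_zero (R := ℝ) hne
      have := h (0, ν)
      simp only [ωt] at this
      apply hν
      have h0 : μ ⟨P (0:V), hPK 0⟩ = 0 := by
        rw [show (⟨P (0:V), hPK 0⟩ : K) = 0 by ext; simp, map_zero]
      rw [h0] at this
      simpa using this
    have hPv' : P v = 0 := congrArg Subtype.val hPv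
    -- Second: μ vanishes on K.
    have hμ : μ = 0 := by
      ext k
      have hk := h (k.1, 0)
      simp only [ωt, ContinuousLinearMap.zero_apply, add_zero] at hk
      have hω : ω v k.1 = 0 := by
        rw [hskew, (hK k.1).1 k.2 v]; ring
      have hPk : (⟨P k.1, hPK k.1⟩ : K) = k := by
        ext; exact hfix k.1 k.2
      rw [hω, hPk] at hk
      simpa using hk.symm
    -- Third: v ∈ K, hence v = P v = 0.
    have hvK : v ∈ K := by
      rw [hK]
      intro w
      have hw := h (w, 0)
      simp only [ωt, hμ, ContinuousLinearMap.zero_apply] at hw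
      simpa using hw
    have : v = 0 := by rw [← hfix v hvK, hPv']
    simp [this, hμ]
end

section
/- Let V be a real Banach space, ω : V × V → ℝ a continuous skew-symmetric bilinear form, K = {v ∈ V : ω(v, w) = 0 for all w ∈ V} its kernel, P : V → V a continuous linear projection with range K, and ω̃((v, μ), (v′, μ′)) = ω(v, v′) + μ′(P v) − μ(P v′) on Ṽ = V × K*. Then the embedding v ↦ (v, 0) pulls ω̃ back to ω, i.e. ω̃((v, 0), (v′, 0)) = ω(v, v′) for all v, v′ ∈ V, and V × {0} is a coisotropic subspace of (Ṽ, ω̃): every (v, μ) ∈ Ṽ satisfying ω̃((v, μ), (v′, 0)) = 0 for all v′ ∈ V has μ = 0, hence lies in V × {0}. -/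
/-- Linear coisotropic embedding theorem, part 2: the embedding `v ↦ (v, 0)` of
`V` into its symplectic thickening `Ṽ = V × K*` pulls `ω̃` back to `ω`, and
`V × {0}` is a coisotropic subspace of `(Ṽ, ω̃)`. -/
theorem stmt1 (V : Type*) [NormedAddCommGroup V] [NormedSpace ℝ V] [CompleteSpace V]
    (ω : V →L[ℝ] V →L[ℝ] ℝ) (hskew : ∀ v w : V, ω v w = - ω w v)
    (K : Submodule ℝ V) (hK : ∀ v : V, v ∈ K ↔ ∀ w : V, ω v w = 0)
    (P : V →L[ℝ] V) (hPK : ∀ v : V, P v ∈ K) (hfix : ∀ v ∈ K, P v = v) :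
    let ωt : (V × (K →L[ℝ] ℝ)) → (V × (K →L[ℝ] ℝ)) → ℝ :=
      fun p q => ω p.1 q.1 + q.2 ⟨P p.1, hPK p.1⟩ - p.2 ⟨P q.1, hPK q.1⟩
    (∀ v v' : V, ωt (v, 0) (v', 0) = ω v v') ∧
    (∀ p : V × (K →L[ℝ] ℝ), (∀ v' : V, ωt p (v', 0) = 0) → p.2 = 0) := by
  intro ωt
  refine ⟨fun v v' => by simp [ωt], fun p hp => ?_⟩
  ext ⟨k, hk⟩
  have h := hp k
  have hωk : ω p.1 k = 0 := by
    rw [hskew]; rw [(hK k).mp hk p.1]; ring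
  have hPk : P k = k := hfix k hk
  simp only [ωt, ContinuousLinearMap.zero_apply, hωk, add_zero, zero_add, zero_sub,
    neg_eq_zero] at h
  have : p.2 ⟨P k, hPK k⟩ = 0 := h
  have heq : (⟨P k, hPK k⟩ : K) = ⟨k, hk⟩ := Subtype.ext hPk
  rwa [heq] at this
end

section
/- Let E be a real Banach space and α : E → E* a continuously differentiable map into the topological dual of E whose derivative is symmetric: (Dα(x)u)(v) = (Dα(x)v)(u) for all x, u, v ∈ E. Then α admits a potential: the function H(x) = ∫₀¹ α(tx)(x) dt is differentiable and satisfies DH(x) = α(x) for every x ∈ E. -/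
/-!
Differentiating under the integral sign (the integrand's derivative is jointly continuous, hence
bounded near `{x} × [0, 1]`) gives `DH(x) = ∫₀¹ (α(tx) + t · Dα(tx)(·)(x)) dt`.
The symmetry of `Dα` turns the integrand into `α(tx) + t · Dα(tx)(x)`, the `t`-derivative of
`t · α(tx)`, so the integral is `α(x)`.
-/

open Topology Set

theorem IsCompact.exists_eventually_forall_norm_le {X Y G : Type*} [TopologicalSpace X]
    [TopologicalSpace Y] [SeminormedAddCommGroup G] {f : X → Y → G} {K : Set Y}
    (hK : IsCompact K) (hf : Continuous (Function.uncurry f)) (x₀ : X) :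
    ∃ C, ∀ᶠ x in 𝓝 x₀, ∀ y ∈ K, ‖f x y‖ ≤ C := by
  obtain ⟨C, hC⟩ :=
    hK.exists_bound_of_continuousOn (hf.comp (Continuous.prodMk_right x₀)).continuousOn
  refine ⟨C + 1, hK.eventually_forall_of_forall_eventually fun y hy => ?_⟩
  have hlt : ‖f x₀ y‖ < C + 1 := (hC y hy).trans_lt (lt_add_one C)
  exact (hf.norm.continuousAt.eventually (gt_mem_nhds hlt)).mono fun _ h => h.le

section

variable {E F : Type*} [NormedAddCommGroup E] [NormedSpace ℝ E] [NormedAddCommGroup F]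
  [NormedSpace ℝ F] {α : E → E →L[ℝ] F}

theorem hasFDerivAt_apply_smul_self {t : ℝ} {y : E} (hα : DifferentiableAt ℝ α (t • y)) :
    HasFDerivAt (fun y => α (t • y) y) (α (t • y) + t • (fderiv ℝ α (t • y)).flip y) y := by
  have hcomp := hα.hasFDerivAt.comp y ((t • ContinuousLinearMap.id ℝ E).hasFDerivAt (x := y))
  refine (hcomp.clm_apply (hasFDerivAt_id y)).congr_fderiv ?_
  ext v
  simp

theorem hasDerivAt_smul_apply_smul {t : ℝ} {x : E} (hα : DifferentiableAt ℝ α (t • x)) :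
    HasDerivAt (fun t : ℝ => t • α (t • x)) (α (t • x) + t • fderiv ℝ α (t • x) x) t := by
  have hray : HasDerivAt (fun t : ℝ => t • x) x t := by
    simpa using (hasDerivAt_id t).smul_const x
  have := (hasDerivAt_id t).smul (hα.hasFDerivAt.comp_hasDerivAt t hray)
  rwa [one_smul, add_comm] at this

theorem ContDiff.continuous_fderiv_apply_smul_self (hα : ContDiff ℝ 1 α) :
    Continuous fun p : E × ℝ => α (p.2 • p.1) + p.2 • (fderiv ℝ α (p.2 • p.1)).flip p.1 := by
  have hflip : Continuous fun p : E × ℝ => (fderiv ℝ α (p.2 • p.1)).flip :=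
    (ContinuousLinearMap.flipₗᵢ ℝ E E F).continuous.comp
      ((hα.continuous_fderiv one_ne_zero).comp (by fun_prop))
  have := hα.continuous
  fun_prop

theorem ContDiff.hasFDerivAt_intervalIntegral_apply_smul_self (hα : ContDiff ℝ 1 α) (x : E) :
    HasFDerivAt (fun y => ∫ t in (0 : ℝ)..1, α (t • y) y)
      (∫ t in (0 : ℝ)..1, α (t • x) + t • (fderiv ℝ α (t • x)).flip x) x := by
  obtain ⟨C, hC⟩ := isCompact_Icc.exists_eventually_forall_norm_le
    (f := fun y t => α (t • y) + t • (fderiv ℝ α (t • y)).flip y)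
    hα.continuous_fderiv_apply_smul_self x
  have hcont (y : E) : Continuous fun t : ℝ => α (t • y) y := by
    have := hα.continuous
    fun_prop
  refine intervalIntegral.hasFDerivAt_integral_of_dominated_of_fderiv_le (bound := fun _ => C) hC
    (.of_forall fun y => (hcont y).aestronglyMeasurable) ((hcont x).intervalIntegrable 0 1)
    (hα.continuous_fderiv_apply_smul_self.comp (.prodMk_right x)).aestronglyMeasurable
    (.of_forall fun t ht y hy =>
      hy t (Ioc_subset_Icc_self (by rwa [uIoc_of_le zero_le_one] at ht)))
    intervalIntegrable_const
    (.of_forall fun t _ y _ => hasFDerivAt_apply_smul_self (hα.differentiable one_ne_zero _))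

theorem ContDiff.intervalIntegral_fderiv_apply_smul_self_eq [CompleteSpace F]
    (hα : ContDiff ℝ 1 α)
    (hsym : ∀ z u v, fderiv ℝ α z u v = fderiv ℝ α z v u) (x : E) :
    ∫ t in (0 : ℝ)..1, α (t • x) + t • (fderiv ℝ α (t • x)).flip x = α x := by
  have hflip (z : E) : (fderiv ℝ α z).flip x = fderiv ℝ α z x := by
    ext v
    exact hsym z v x
  have hcont : Continuous fun t : ℝ => α (t • x) + t • fderiv ℝ α (t • x) x := by
    have := hα.continuous
    have := hα.continuous_fderiv one_ne_zero
    fun_prop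
  simp only [hflip]
  rw [intervalIntegral.integral_eq_sub_of_hasDerivAt
    (fun t _ => hasDerivAt_smul_apply_smul (hα.differentiable one_ne_zero _))
    (hcont.intervalIntegrable 0 1)]
  simp

end

theorem stmt3_general (E : Type*) [NormedAddCommGroup E] [NormedSpace ℝ E]
    (α : E → (E →L[ℝ] ℝ)) (hα : ContDiff ℝ 1 α)
    (hsym : ∀ x u v : E, fderiv ℝ α x u v = fderiv ℝ α x v u) :
    ∀ x : E, HasFDerivAt (fun y : E => ∫ t in (0:ℝ)..1, α (t • y) y) (α x) x := by
  intro x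
  simpa only [hα.intervalIntegral_fderiv_apply_smul_self_eq hsym] using
    hα.hasFDerivAt_intervalIntegral_apply_smul_self x

/-- Volterra–Tonti–Vainberg construction: a `C¹` map `α : E → E*` with symmetric
derivative (Helmholtz condition) is the differential of the explicit potential
`H(x) = ∫₀¹ α(tx)(x) dt`. -/
theorem stmt3 (E : Type*) [NormedAddCommGroup E] [NormedSpace ℝ E] [CompleteSpace E]
    (α : E → (E →L[ℝ] ℝ)) (hα : ContDiff ℝ 1 α)
    (hsym : ∀ x u v : E, fderiv ℝ α x u v = fderiv ℝ α x v u) :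
    ∀ x : E, HasFDerivAt (fun y : E => ∫ t in (0:ℝ)..1, α (t • y) y) (α x) x :=
  stmt3_general E α hα hsym
end

section
/- Let (A₁, E₁) and (A₂, E₂) be smooth solutions of the Maxwell evolution system with (possibly different) smooth gauge functions φ₁, φ₂, both satisfying the Gauss constraint div_x E_i = 0 for all t, and suppose there exists R > 0 such that A_i(t, x) = 0 and E_i(t, x) = 0 whenever |x| ≥ R, for i = 1, 2 and all t. Then the pre-symplectic pairing of the two solutions, t ↦ ∫_{ℝ³} (A₁(t, x) · E₂(t, x) − A₂(t, x) · E₁(t, x)) dx, is constant in t. (Concretely, this expresses that each evolution vector field Γ_φ preserves the pre-symplectic form: 𝓛_{Γ_φ} ω = 0.) -/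
/-!
Differentiating under the integral sign (all fields vanish outside a fixed ball), the time
derivative of the pairing is `∫ (∂ₜA₁·E₂ + A₁·∂ₜE₂ − ∂ₜA₂·E₁ − A₂·∂ₜE₁)`. After inserting the
evolution equations the `E₁·E₂` terms cancel, and thanks to the Gauss constraint what remains is
the divergence of the compactly supported flux
`φ₁E₂ − φ₂E₁ + Σᵢ (A₁ⁱ ∇A₂ⁱ − A₂ⁱ ∇A₁ⁱ) + (div A₁) A₂ − (div A₂) A₁`,
whose integral vanishes.
-/

open MeasureTheory

/-- Partial derivative `∂_j f` of a scalar function on `ℝ³`. -/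
noncomputable def pd (f : (Fin 3 → ℝ) → ℝ) (j : Fin 3) (x : Fin 3 → ℝ) : ℝ :=
  fderiv ℝ f x (Pi.single j 1)

/-- Divergence `div F = Σ_j ∂_j F_j` of a vector field on `ℝ³`. -/
noncomputable def div3 (F : (Fin 3 → ℝ) → (Fin 3 → ℝ)) (x : Fin 3 → ℝ) : ℝ :=
  ∑ j, pd (fun y => F y j) j x

/-- Laplacian `Δf = Σ_j ∂_j² f` of a scalar function on `ℝ³`. -/
noncomputable def lap3 (f : (Fin 3 → ℝ) → ℝ) (x : Fin 3 → ℝ) : ℝ :=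
  ∑ j, pd (pd f j) j x

/-- Curl of a vector field on `ℝ³`. -/
noncomputable def curl3 (F : (Fin 3 → ℝ) → (Fin 3 → ℝ)) (x : Fin 3 → ℝ) : Fin 3 → ℝ :=
  ![pd (fun y => F y 2) 1 x - pd (fun y => F y 1) 2 x,
    pd (fun y => F y 0) 2 x - pd (fun y => F y 2) 0 x,
    pd (fun y => F y 1) 0 x - pd (fun y => F y 0) 1 x]

section ParametricIntegral

variable {E : Type*} [NormedAddCommGroup E] [NormedSpace ℝ E]

theorem hasDerivAt_comp_prodMk_left {G : Type*} [NormedAddCommGroup G] [NormedSpace ℝ G]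
    {F : ℝ × E → G} {p : ℝ × E} (hF : DifferentiableAt ℝ F p) :
    HasDerivAt (fun s => F (s, p.2)) (fderiv ℝ F p (1, 0)) p.1 :=
  hF.hasFDerivAt.comp_hasDerivAt p.1 ((hasDerivAt_id p.1).prodMk (hasDerivAt_const p.1 p.2))

theorem ContDiff.hasDerivAt_deriv_left {G : Type*} [NormedAddCommGroup G] [NormedSpace ℝ G]
    {F : ℝ → E → G} {n : WithTop ℕ∞} (hF : ContDiff ℝ n fun p : ℝ × E => F p.1 p.2) (hn : n ≠ 0)
    (t : ℝ) (x : E) : HasDerivAt (fun s => F s x) (deriv (fun s => F s x) t) t :=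
  (hasDerivAt_comp_prodMk_left (p := (t, x)) (hF.differentiable hn _)).differentiableAt.hasDerivAt

variable [MeasurableSpace E] [OpensMeasurableSpace E]

theorem hasDerivAt_integral_of_contDiff_of_support_subset (μ : Measure E)
    [IsFiniteMeasureOnCompacts μ] {f : ℝ → E → ℝ}
    (hf : ContDiff ℝ 1 fun p : ℝ × E => f p.1 p.2) {K : Set E} (hK : IsCompact K)
    (hfK : ∀ t, ∀ x ∉ K, f t x = 0) (t₀ : ℝ) :
    HasDerivAt (fun t => ∫ x, f t x ∂μ) (∫ x, deriv (fun t => f t x) t₀ ∂μ) t₀ := by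
  set f' : ℝ → E → ℝ := fun t x => fderiv ℝ (fun p : ℝ × E => f p.1 p.2) (t, x) (1, 0)
  have hf' : ∀ t x, HasDerivAt (fun s => f s x) (f' t x) t := fun t x =>
    hasDerivAt_comp_prodMk_left (p := (t, x)) (hf.differentiable one_ne_zero _)
  have hf'_cont : Continuous fun p : ℝ × E => f' p.1 p.2 :=
    (hf.continuous_fderiv one_ne_zero).clm_apply continuous_const
  have hf'K : ∀ t, ∀ x ∉ K, f' t x = 0 := fun t x hx =>
    (hf' t x).unique (by simpa only [hfK _ x hx] using hasDerivAt_const t (0 : ℝ))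
  obtain ⟨C, hC⟩ := ((isCompact_closedBall t₀ 1).prod hK).exists_bound_of_continuousOn
    hf'_cont.continuousOn
  have hf_cont : ∀ t, Continuous (f t) := fun t => hf.continuous.comp (.prodMk_right t)
  have hbound : ∀ x, ∀ t ∈ Metric.ball t₀ 1, ‖f' t x‖ ≤ K.indicator (fun _ => C) x := by
    intro x t ht
    by_cases hx : x ∈ K
    · simpa [hx] using hC (t, x) ⟨Metric.ball_subset_closedBall ht, hx⟩
    · simp [hx, hf'K t x hx]
  have key := hasDerivAt_integral_of_dominated_loc_of_deriv_le (μ := μ)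
    (Metric.ball_mem_nhds t₀ one_pos)
    (.of_forall fun t => (hf_cont t).aestronglyMeasurable)
    ((hf_cont t₀).integrable_of_hasCompactSupport (.intro hK (hfK t₀)))
    (hf'_cont.comp (.prodMk_right t₀)).aestronglyMeasurable
    (.of_forall hbound)
    ((integrable_indicator_iff hK.measurableSet).2 (integrableOn_const hK.measure_lt_top.ne))
    (.of_forall fun x t _ => hf' t x)
  simpa only [fun x => (hf' t₀ x).deriv] using key.2

end ParametricIntegral

theorem integral_fderiv_apply_eq_zero {E : Type*} [NormedAddCommGroup E] [NormedSpace ℝ E]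
    [FiniteDimensional ℝ E] [MeasurableSpace E] [BorelSpace E] (μ : Measure E)
    [μ.IsAddHaarMeasure] {g : E → ℝ} (hg : ContDiff ℝ 1 g) (hgc : HasCompactSupport g) (v : E) :
    ∫ x, fderiv ℝ g x v ∂μ = 0 := by
  have h := integral_mul_fderiv_eq_neg_fderiv_mul_of_integrable (μ := μ) (f := fun _ => (1 : ℝ))
    (g := g) (v := v) (by simp) (by simpa using ((hg.continuous_fderiv one_ne_zero).clm_apply
      continuous_const).integrable_of_hasCompactSupport (hgc.fderiv_apply ℝ v))
    (by simpa using hg.continuous.integrable_of_hasCompactSupport hgc)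
    (fun x _ => differentiableAt_const 1) (fun x _ => hg.differentiable one_ne_zero x)
  simpa using h

local notation "ℝ³" => Fin 3 → ℝ

section PartialDerivatives

variable {u v : ℝ³ → ℝ} {x : ℝ³} (j : Fin 3)

theorem pd_add (hu : DifferentiableAt ℝ u x) (hv : DifferentiableAt ℝ v x) :
    pd (fun y => u y + v y) j x = pd u j x + pd v j x := by
  simp [pd, fderiv_fun_add hu hv]

theorem pd_sub (hu : DifferentiableAt ℝ u x) (hv : DifferentiableAt ℝ v x) :
    pd (fun y => u y - v y) j x = pd u j x - pd v j x := by
  simp [pd, fderiv_fun_sub hu hv]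

theorem pd_mul (hu : DifferentiableAt ℝ u x) (hv : DifferentiableAt ℝ v x) :
    pd (fun y => u y * v y) j x = pd u j x * v x + u x * pd v j x := by
  simp [pd, fderiv_fun_mul hu hv]
  ring

theorem pd_sum {ι : Type*} (s : Finset ι) {w : ι → ℝ³ → ℝ}
    (hw : ∀ i ∈ s, DifferentiableAt ℝ (w i) x) :
    pd (fun y => ∑ i ∈ s, w i y) j x = ∑ i ∈ s, pd (w i) j x := by
  simp [pd, fderiv_fun_sum hw]

theorem contDiff_pd {m n : WithTop ℕ∞} (hu : ContDiff ℝ n u) (hmn : m + 1 ≤ n) :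
    ContDiff ℝ m (pd u j) :=
  (hu.fderiv_right hmn).clm_apply contDiff_const

theorem hasCompactSupport_pd (hu : HasCompactSupport u) : HasCompactSupport (pd u j) :=
  hu.fderiv_apply ℝ _

end PartialDerivatives

theorem contDiff_div3 {m n : WithTop ℕ∞} {F : ℝ³ → ℝ³} (hF : ContDiff ℝ n F) (hmn : m + 1 ≤ n) :
    ContDiff ℝ m (div3 F) :=
  .sum fun j _ => contDiff_pd j (contDiff_pi.1 hF j) hmn

theorem integral_div3_eq_zero {F : ℝ³ → ℝ³} (hF : ContDiff ℝ 1 F) (hFc : HasCompactSupport F) :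
    ∫ x, div3 F x = 0 := by
  have hFj : ∀ j, ContDiff ℝ 1 fun y => F y j := contDiff_pi.1 hF
  have hFjc : ∀ j, HasCompactSupport fun y => F y j := fun j =>
    hFc.comp_left (g := fun v : ℝ³ => v j) rfl
  simp only [div3]
  rw [integral_finsetSum _ fun j _ => (contDiff_pd j (hFj j) (m := 0) (by simp)).continuous
    |>.integrable_of_hasCompactSupport (hasCompactSupport_pd j (hFjc j))]
  exact Finset.sum_eq_zero fun j _ => integral_fderiv_apply_eq_zero volume (hFj j) (hFjc j) _

noncomputable def symplecticFlux (a₁ e₁ a₂ e₂ : ℝ³ → ℝ³) (φ₁ φ₂ : ℝ³ → ℝ) : ℝ³ → ℝ³ :=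
  fun x j => (φ₁ x * e₂ x j - φ₂ x * e₁ x j)
    + ∑ i, (a₁ x i * pd (fun y => a₂ y i) j x - a₂ x i * pd (fun y => a₁ y i) j x)
    + (a₂ x j * div3 a₁ x - a₁ x j * div3 a₂ x)

section SymplecticFlux

variable {a₁ e₁ a₂ e₂ : ℝ³ → ℝ³} {φ₁ φ₂ : ℝ³ → ℝ}

theorem div3_symplecticFlux (ha₁ : ContDiff ℝ 2 a₁) (ha₂ : ContDiff ℝ 2 a₂)
    (he₁ : Differentiable ℝ e₁) (he₂ : Differentiable ℝ e₂)
    (hφ₁ : Differentiable ℝ φ₁) (hφ₂ : Differentiable ℝ φ₂) {x : ℝ³}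
    (hGauss₁ : div3 e₁ x = 0) (hGauss₂ : div3 e₂ x = 0) :
    div3 (symplecticFlux a₁ e₁ a₂ e₂ φ₁ φ₂) x =
      ∑ i, ((e₁ x i + pd φ₁ i x) * e₂ x i
          + a₁ x i * (lap3 (fun y => a₂ y i) x - pd (div3 a₂) i x)
        - ((e₂ x i + pd φ₂ i x) * e₁ x i
          + a₂ x i * (lap3 (fun y => a₁ y i) x - pd (div3 a₁) i x))) := by
  have da₁ : ∀ i, Differentiable ℝ fun y => a₁ y i := fun i =>
    (contDiff_pi.1 ha₁ i).differentiable (by simp)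
  have da₂ : ∀ i, Differentiable ℝ fun y => a₂ y i := fun i =>
    (contDiff_pi.1 ha₂ i).differentiable (by simp)
  have de₁ : ∀ i, Differentiable ℝ fun y => e₁ y i := differentiable_pi.1 he₁
  have de₂ : ∀ i, Differentiable ℝ fun y => e₂ y i := differentiable_pi.1 he₂
  have dpa₁ : ∀ i j, Differentiable ℝ (pd (fun y => a₁ y i) j) := fun i j =>
    (contDiff_pd j (contDiff_pi.1 ha₁ i) (m := 1) (by norm_num)).differentiable one_ne_zero
  have dpa₂ : ∀ i j, Differentiable ℝ (pd (fun y => a₂ y i) j) := fun i j =>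
    (contDiff_pd j (contDiff_pi.1 ha₂ i) (m := 1) (by norm_num)).differentiable one_ne_zero
  have ddiv₁ : Differentiable ℝ (div3 a₁) :=
    (contDiff_div3 ha₁ (m := 1) (by norm_num)).differentiable one_ne_zero
  have ddiv₂ : Differentiable ℝ (div3 a₂) :=
    (contDiff_div3 ha₂ (m := 1) (by norm_num)).differentiable one_ne_zero
  show ∑ j, pd (fun y => symplecticFlux a₁ e₁ a₂ e₂ φ₁ φ₂ y j) j x = _
  simp only [symplecticFlux]
  simp (disch := fun_prop) only [pd_add, pd_sub, pd_mul, pd_sum]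
  simp only [lap3, div3, Fin.sum_univ_three] at hGauss₁ hGauss₂ ⊢
  linear_combination φ₁ x * hGauss₂ - φ₂ x * hGauss₁

theorem contDiff_symplecticFlux (ha₁ : ContDiff ℝ 2 a₁) (ha₂ : ContDiff ℝ 2 a₂)
    (he₁ : ContDiff ℝ 1 e₁) (he₂ : ContDiff ℝ 1 e₂)
    (hφ₁ : ContDiff ℝ 1 φ₁) (hφ₂ : ContDiff ℝ 1 φ₂) :
    ContDiff ℝ 1 (symplecticFlux a₁ e₁ a₂ e₂ φ₁ φ₂) := by
  have ca₁ : ∀ i, ContDiff ℝ 1 fun y => a₁ y i := fun i => (contDiff_pi.1 ha₁ i).of_le one_le_two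
  have ca₂ : ∀ i, ContDiff ℝ 1 fun y => a₂ y i := fun i => (contDiff_pi.1 ha₂ i).of_le one_le_two
  have ce₁ : ∀ i, ContDiff ℝ 1 fun y => e₁ y i := contDiff_pi.1 he₁
  have ce₂ : ∀ i, ContDiff ℝ 1 fun y => e₂ y i := contDiff_pi.1 he₂
  have cpa₁ : ∀ i j, ContDiff ℝ 1 (pd (fun y => a₁ y i) j) := fun i j =>
    contDiff_pd j (contDiff_pi.1 ha₁ i) (by norm_num)
  have cpa₂ : ∀ i j, ContDiff ℝ 1 (pd (fun y => a₂ y i) j) := fun i j =>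
    contDiff_pd j (contDiff_pi.1 ha₂ i) (by norm_num)
  have cdiv₁ : ContDiff ℝ 1 (div3 a₁) := contDiff_div3 ha₁ (by norm_num)
  have cdiv₂ : ContDiff ℝ 1 (div3 a₂) := contDiff_div3 ha₂ (by norm_num)
  exact contDiff_pi.2 fun j => by unfold symplecticFlux; fun_prop

theorem hasCompactSupport_symplecticFlux (ha₁ : HasCompactSupport a₁)
    (he₁ : HasCompactSupport e₁) (ha₂ : HasCompactSupport a₂) (he₂ : HasCompactSupport e₂) :
    HasCompactSupport (symplecticFlux a₁ e₁ a₂ e₂ φ₁ φ₂) := by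
  have hpd : ∀ {a : ℝ³ → ℝ³}, HasCompactSupport a →
      ∀ᶠ x in Filter.coclosedCompact ℝ³, ∀ i j, pd (fun y => a y i) j x = 0 :=
    fun ha => Filter.eventually_all.2 fun i => Filter.eventually_all.2 fun j =>
      hasCompactSupport_iff_eventuallyEq.1
        (hasCompactSupport_pd j (ha.comp_left (g := fun v : ℝ³ => v i) rfl))
  simp only [hasCompactSupport_iff_eventuallyEq] at ha₁ he₁ ha₂ he₂ hpd ⊢
  filter_upwards [ha₁, he₁, ha₂, he₂, hpd ha₁, hpd ha₂] with x ha₁x he₁x ha₂x he₂x hpa₁ hpa₂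
  funext j
  simp [symplecticFlux, div3, ha₁x, he₁x, ha₂x, he₂x, hpa₁, hpa₂]

end SymplecticFlux

theorem integral_pairing_evolution_eq_zero {a₁ e₁ a₂ e₂ : ℝ³ → ℝ³} {φ₁ φ₂ : ℝ³ → ℝ}
    (ha₁ : ContDiff ℝ 2 a₁) (ha₂ : ContDiff ℝ 2 a₂) (he₁ : ContDiff ℝ 1 e₁)
    (he₂ : ContDiff ℝ 1 e₂) (hφ₁ : ContDiff ℝ 1 φ₁) (hφ₂ : ContDiff ℝ 1 φ₂)
    (hGauss₁ : ∀ x, div3 e₁ x = 0) (hGauss₂ : ∀ x, div3 e₂ x = 0)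
    (ha₁c : HasCompactSupport a₁) (he₁c : HasCompactSupport e₁)
    (ha₂c : HasCompactSupport a₂) (he₂c : HasCompactSupport e₂) :
    ∫ x, ∑ i, ((e₁ x i + pd φ₁ i x) * e₂ x i
          + a₁ x i * (lap3 (fun y => a₂ y i) x - pd (div3 a₂) i x)
        - ((e₂ x i + pd φ₂ i x) * e₁ x i
          + a₂ x i * (lap3 (fun y => a₁ y i) x - pd (div3 a₁) i x))) = 0 := by
  rw [← integral_div3_eq_zero (contDiff_symplecticFlux ha₁ ha₂ he₁ he₂ hφ₁ hφ₂)
    (hasCompactSupport_symplecticFlux (φ₁ := φ₁) (φ₂ := φ₂) ha₁c he₁c ha₂c he₂c)]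
  refine integral_congr_ae (.of_forall fun x => ?_)
  exact (div3_symplecticFlux ha₁ ha₂ (he₁.differentiable one_ne_zero)
    (he₂.differentiable one_ne_zero) (hφ₁.differentiable one_ne_zero)
    (hφ₂.differentiable one_ne_zero) (hGauss₁ x) (hGauss₂ x)).symm

theorem HasDerivAt.sum_mul_sub_mul {ι : Type*} [Fintype ι] {a₁ e₁ a₂ e₂ : ℝ → ι → ℝ}
    {a₁' e₁' a₂' e₂' : ι → ℝ} {t : ℝ}
    (ha₁ : ∀ i, HasDerivAt (a₁ · i) (a₁' i) t) (he₁ : ∀ i, HasDerivAt (e₁ · i) (e₁' i) t)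
    (ha₂ : ∀ i, HasDerivAt (a₂ · i) (a₂' i) t) (he₂ : ∀ i, HasDerivAt (e₂ · i) (e₂' i) t) :
    HasDerivAt (fun s => ∑ i, (a₁ s i * e₂ s i - a₂ s i * e₁ s i))
      (∑ i, (a₁' i * e₂ t i + a₁ t i * e₂' i - (a₂' i * e₁ t i + a₂ t i * e₁' i))) t :=
  .fun_sum fun i _ => ((ha₁ i).fun_mul (he₂ i)).fun_sub ((ha₂ i).fun_mul (he₁ i))

theorem stmt15_general (A₁ E₁ A₂ E₂ : ℝ → (Fin 3 → ℝ) → (Fin 3 → ℝ))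
    (φ₁ φ₂ : ℝ → (Fin 3 → ℝ) → ℝ)
    (hA₁ : ContDiff ℝ (⊤ : ℕ∞) fun p : ℝ × (Fin 3 → ℝ) => A₁ p.1 p.2)
    (hE₁ : ContDiff ℝ (⊤ : ℕ∞) fun p : ℝ × (Fin 3 → ℝ) => E₁ p.1 p.2)
    (hA₂ : ContDiff ℝ (⊤ : ℕ∞) fun p : ℝ × (Fin 3 → ℝ) => A₂ p.1 p.2)
    (hE₂ : ContDiff ℝ (⊤ : ℕ∞) fun p : ℝ × (Fin 3 → ℝ) => E₂ p.1 p.2)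
    (hφ₁ : ContDiff ℝ (⊤ : ℕ∞) fun p : ℝ × (Fin 3 → ℝ) => φ₁ p.1 p.2)
    (hφ₂ : ContDiff ℝ (⊤ : ℕ∞) fun p : ℝ × (Fin 3 → ℝ) => φ₂ p.1 p.2)
    (heqA₁ : ∀ (t : ℝ) (x : Fin 3 → ℝ) (i : Fin 3),
      deriv (fun s => A₁ s x i) t = E₁ t x i + pd (φ₁ t) i x)
    (heqE₁ : ∀ (t : ℝ) (x : Fin 3 → ℝ) (i : Fin 3),
      deriv (fun s => E₁ s x i) t = lap3 (fun y => A₁ t y i) x - pd (div3 (A₁ t)) i x)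
    (heqA₂ : ∀ (t : ℝ) (x : Fin 3 → ℝ) (i : Fin 3),
      deriv (fun s => A₂ s x i) t = E₂ t x i + pd (φ₂ t) i x)
    (heqE₂ : ∀ (t : ℝ) (x : Fin 3 → ℝ) (i : Fin 3),
      deriv (fun s => E₂ s x i) t = lap3 (fun y => A₂ t y i) x - pd (div3 (A₂ t)) i x)
    (hGauss₁ : ∀ (t : ℝ) (x : Fin 3 → ℝ), div3 (E₁ t) x = 0)
    (hGauss₂ : ∀ (t : ℝ) (x : Fin 3 → ℝ), div3 (E₂ t) x = 0)
    (R : ℝ)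
    (hsupp : ∀ (t : ℝ) (x : Fin 3 → ℝ), R ≤ ‖x‖ →
      A₁ t x = 0 ∧ E₁ t x = 0 ∧ A₂ t x = 0 ∧ E₂ t x = 0) :
    ∀ t s : ℝ,
      (∫ x : Fin 3 → ℝ, ∑ i, (A₁ t x i * E₂ t x i - A₂ t x i * E₁ t x i))
        = ∫ x : Fin 3 → ℝ, ∑ i, (A₁ s x i * E₂ s x i - A₂ s x i * E₁ s x i) := by
  have slice {G : Type} [NormedAddCommGroup G] [NormedSpace ℝ G] {F : ℝ → ℝ³ → G}
      (hF : ContDiff ℝ (⊤ : ℕ∞) fun p : ℝ × ℝ³ => F p.1 p.2) (t : ℝ) (n : ℕ) :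
      ContDiff ℝ n (F t) :=
    contDiff_infty.1 (hF.comp (contDiff_prodMk_right t)) n
  have hK (t : ℝ) : ∀ x ∉ Metric.closedBall (0 : ℝ³) R,
      A₁ t x = 0 ∧ E₁ t x = 0 ∧ A₂ t x = 0 ∧ E₂ t x = 0 := fun x hx =>
    hsupp t x (not_le.1 (mt mem_closedBall_zero_iff.2 hx)).le
  have hpairing (t : ℝ) : HasDerivAt
      (fun t => ∫ x : ℝ³, ∑ i, (A₁ t x i * E₂ t x i - A₂ t x i * E₁ t x i)) 0 t := by
    convert hasDerivAt_integral_of_contDiff_of_support_subset volume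
      (f := fun t x => ∑ i, (A₁ t x i * E₂ t x i - A₂ t x i * E₁ t x i))
      (ContDiff.sum fun i _ => ((contDiff_pi.1 hA₁ i).mul (contDiff_pi.1 hE₂ i)).sub
        ((contDiff_pi.1 hA₂ i).mul (contDiff_pi.1 hE₁ i)) |>.of_le (by simp))
      (isCompact_closedBall 0 R) (fun t x hx => by simp [hK t x hx]) t using 1
    rw [← integral_pairing_evolution_eq_zero (slice hA₁ t 2) (slice hA₂ t 2) (slice hE₁ t 1)
      (slice hE₂ t 1) (slice hφ₁ t 1) (slice hφ₂ t 1) (hGauss₁ t) (hGauss₂ t)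
      (.intro (isCompact_closedBall 0 R) fun x hx => (hK t x hx).1)
      (.intro (isCompact_closedBall 0 R) fun x hx => (hK t x hx).2.1)
      (.intro (isCompact_closedBall 0 R) fun x hx => (hK t x hx).2.2.1)
      (.intro (isCompact_closedBall 0 R) fun x hx => (hK t x hx).2.2.2)]
    refine integral_congr_ae (.of_forall fun x => ?_)
    have curve {F : ℝ → ℝ³ → ℝ³} (hF : ContDiff ℝ (⊤ : ℕ∞) fun p : ℝ × ℝ³ => F p.1 p.2)
        (i : Fin 3) : HasDerivAt (fun s => F s x i) (deriv (fun s => F s x i) t) t :=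
      (contDiff_pi.1 hF i).hasDerivAt_deriv_left (F := fun s y => F s y i) (by simp) t x
    exact (HasDerivAt.sum_mul_sub_mul (fun i => heqA₁ t x i ▸ curve hA₁ i)
      (fun i => heqE₁ t x i ▸ curve hE₁ i) (fun i => heqA₂ t x i ▸ curve hA₂ i)
      (fun i => heqE₂ t x i ▸ curve hE₂ i)).deriv.symm
  exact fun t s => is_const_of_deriv_eq_zero (fun u => (hpairing u).differentiableAt)
    (fun u => (hpairing u).deriv) t s

/-- The evolution vector fields `Γ_φ` preserve the pre-symplectic form: for two
solutions of the Maxwell evolution system (with possibly different gauge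
functions) satisfying the Gauss constraint and supported in a fixed ball, the
pre-symplectic pairing `∫ (A₁·E₂ − A₂·E₁) dx` is constant in time. -/
theorem stmt15 (A₁ E₁ A₂ E₂ : ℝ → (Fin 3 → ℝ) → (Fin 3 → ℝ))
    (φ₁ φ₂ : ℝ → (Fin 3 → ℝ) → ℝ)
    (hA₁ : ContDiff ℝ (⊤ : ℕ∞) fun p : ℝ × (Fin 3 → ℝ) => A₁ p.1 p.2)
    (hE₁ : ContDiff ℝ (⊤ : ℕ∞) fun p : ℝ × (Fin 3 → ℝ) => E₁ p.1 p.2)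
    (hA₂ : ContDiff ℝ (⊤ : ℕ∞) fun p : ℝ × (Fin 3 → ℝ) => A₂ p.1 p.2)
    (hE₂ : ContDiff ℝ (⊤ : ℕ∞) fun p : ℝ × (Fin 3 → ℝ) => E₂ p.1 p.2)
    (hφ₁ : ContDiff ℝ (⊤ : ℕ∞) fun p : ℝ × (Fin 3 → ℝ) => φ₁ p.1 p.2)
    (hφ₂ : ContDiff ℝ (⊤ : ℕ∞) fun p : ℝ × (Fin 3 → ℝ) => φ₂ p.1 p.2)
    (heqA₁ : ∀ (t : ℝ) (x : Fin 3 → ℝ) (i : Fin 3),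
      deriv (fun s => A₁ s x i) t = E₁ t x i + pd (φ₁ t) i x)
    (heqE₁ : ∀ (t : ℝ) (x : Fin 3 → ℝ) (i : Fin 3),
      deriv (fun s => E₁ s x i) t = lap3 (fun y => A₁ t y i) x - pd (div3 (A₁ t)) i x)
    (heqA₂ : ∀ (t : ℝ) (x : Fin 3 → ℝ) (i : Fin 3),
      deriv (fun s => A₂ s x i) t = E₂ t x i + pd (φ₂ t) i x)
    (heqE₂ : ∀ (t : ℝ) (x : Fin 3 → ℝ) (i : Fin 3),
      deriv (fun s => E₂ s x i) t = lap3 (fun y => A₂ t y i) x - pd (div3 (A₂ t)) i x)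
    (hGauss₁ : ∀ (t : ℝ) (x : Fin 3 → ℝ), div3 (E₁ t) x = 0)
    (hGauss₂ : ∀ (t : ℝ) (x : Fin 3 → ℝ), div3 (E₂ t) x = 0)
    (R : ℝ) (hR : 0 < R)
    (hsupp : ∀ (t : ℝ) (x : Fin 3 → ℝ), R ≤ ‖x‖ →
      A₁ t x = 0 ∧ E₁ t x = 0 ∧ A₂ t x = 0 ∧ E₂ t x = 0) :
    ∀ t s : ℝ,
      (∫ x : Fin 3 → ℝ, ∑ i, (A₁ t x i * E₂ t x i - A₂ t x i * E₁ t x i))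
        = ∫ x : Fin 3 → ℝ, ∑ i, (A₁ s x i * E₂ s x i - A₂ s x i * E₁ s x i) :=
  stmt15_general A₁ E₁ A₂ E₂ φ₁ φ₂ hA₁ hE₁ hA₂ hE₂ hφ₁ hφ₂ heqA₁ heqE₁ heqA₂ heqE₂ hGauss₁ hGauss₂ R
    hsupp
end
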